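/- arXiv:2105.01973 — 6 statements merged into one kernel-verified Lean document; each statement's English description precedes it below -/
import Mathlib

section
/- Let k > m ≥ 1 be integers, let R > 0, and let 0 < ε ≤ min(2, 3R). Let λ_1, …, λ_m be distinct real numbers with |λ_j| < ε/(3R(k−m)m) for all j ∈ {1,…,m}, and let V = Vander(λ, k). Then every vector x ∈ ℝ^k with ‖x‖₂ ≤ R and xᵀV = 0 satisfies |x[i]| ≤ ε for all i ∈ {1, …, m}. -/
/-!
Read `x` as the coefficient vector of `p = ∑ x_r X^r`; `xᵀV = 0` says that `p` vanishes at the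
distinct `λ_j`, so `p = P q` with `P = ∏ (X - λ_j)`. Small roots make `P` close to `X^m`: by Vieta,
its coefficients below degree `m` have total size `c ≤ t / (1 - t)`, where `t = m · max |λ_j|`.
Comparing coefficients of `p = P q` at a largest coefficient of `q` gives `‖q‖_∞ ≤ ‖p‖_∞ / (1 - c)`,
and each coefficient of `p` below degree `m` is at most `c ‖q‖_∞`. The case `R ≤ ε` is trivial
since `|x_i| ≤ ‖x‖₂`; otherwise the hypothesis on the `λ_j` gives `t ≤ ε / (3R(k - m)) ≤ 1/3`, and
then `|x_i| ≤ 3 t ‖p‖_∞ ≤ ε / (k - m)`.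
-/

open Matrix

/-- The `k × m` Vandermonde-type matrix with entry `(r, c)` equal to `λ_c ^ r`
(0-indexed; in 1-indexed notation the `(r,c)` entry is `λ_c^{r-1}`). -/
noncomputable def vander {m : ℕ} (lam : Fin m → ℝ) (k : ℕ) : Matrix (Fin k) (Fin m) ℝ :=
  fun r c => lam c ^ (r : ℕ)

open Polynomial Finset

namespace Polynomial

theorem coeff_mul_add_natDegree_of_monic {R : Type*} [Semiring R] {P : R[X]} (hP : P.Monic)
    (q : R[X]) (n : ℕ) :
    (P * q).coeff (n + P.natDegree) =
      q.coeff n + ∑ u ∈ range P.natDegree, P.coeff u * q.coeff (n + P.natDegree - u) := by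
  rw [coeff_mul, Nat.sum_antidiagonal_eq_sum_range_succ_mk,
    ← sum_subset (range_subset_range.mpr (by omega : P.natDegree + 1 ≤ n + P.natDegree + 1))]
  · rw [sum_range_succ, hP.coeff_natDegree, one_mul, Nat.add_sub_cancel, add_comm]
  · intro u hu hu'
    rw [mem_range] at hu hu'
    rw [coeff_eq_zero_of_natDegree_lt (by omega), zero_mul]

section NormedRing

variable {R : Type*} [NormedRing R]

theorem norm_sum_mul_le {ι : Type*} (s : Finset ι) (a b : ι → R) {M : ℝ}
    (hb : ∀ i ∈ s, ‖b i‖ ≤ M) : ‖∑ i ∈ s, a i * b i‖ ≤ (∑ i ∈ s, ‖a i‖) * M := by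
  rw [sum_mul]
  exact (norm_sum_le _ _).trans <| sum_le_sum fun i hi =>
    (norm_mul_le _ _).trans (mul_le_mul_of_nonneg_left (hb i hi) (norm_nonneg _))

theorem norm_coeff_mul_le {P q : R[X]} {M : ℝ} (hq : ∀ n, ‖q.coeff n‖ ≤ M) {i d : ℕ}
    (hi : i < d) : ‖(P * q).coeff i‖ ≤ (∑ u ∈ range d, ‖P.coeff u‖) * M := by
  rw [coeff_mul, Nat.sum_antidiagonal_eq_sum_range_succ_mk]
  have hM : 0 ≤ M := (norm_nonneg _).trans (hq 0)
  refine (norm_sum_mul_le _ _ _ fun u _ => hq (i - u)).trans ?_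
  exact mul_le_mul_of_nonneg_right (sum_le_sum_of_subset_of_nonneg (range_subset_range.mpr hi)
    fun u _ _ => norm_nonneg (P.coeff u)) hM

theorem norm_coeff_le_of_monic_mul {P q : R[X]} (hP : P.Monic) {c A : ℝ}
    (hc : ∑ u ∈ range P.natDegree, ‖P.coeff u‖ ≤ c) (hc1 : c ≤ 1)
    (hA : ∀ n, ‖(P * q).coeff n‖ ≤ A) (n : ℕ) : (1 - c) * ‖q.coeff n‖ ≤ A := by
  obtain ⟨b, -, hb⟩ :=
    (range (q.natDegree + 1)).exists_max_image (‖q.coeff ·‖) nonempty_range_add_one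
  have hmax : ∀ n, ‖q.coeff n‖ ≤ ‖q.coeff b‖ := fun n => by
    by_cases hn : n ≤ q.natDegree
    · exact hb n (mem_range.mpr (by omega))
    · rw [coeff_eq_zero_of_natDegree_lt (by omega), norm_zero]
      exact norm_nonneg _
  have hb_le : ‖q.coeff b‖ ≤ A + c * ‖q.coeff b‖ := calc
    ‖q.coeff b‖ = ‖(P * q).coeff (b + P.natDegree) -
        ∑ u ∈ range P.natDegree, P.coeff u * q.coeff (b + P.natDegree - u)‖ :=
      congrArg norm (eq_sub_of_add_eq (coeff_mul_add_natDegree_of_monic hP q b).symm)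
    _ ≤ A + (∑ u ∈ range P.natDegree, ‖P.coeff u‖) * ‖q.coeff b‖ :=
      (norm_sub_le _ _).trans (add_le_add (hA _) (norm_sum_mul_le _ _ _ fun u _ => hmax _))
    _ ≤ A + c * ‖q.coeff b‖ := by gcongr
  calc (1 - c) * ‖q.coeff n‖ ≤ (1 - c) * ‖q.coeff b‖ :=
        mul_le_mul_of_nonneg_left (hmax n) (by linarith)
    _ ≤ A := by linarith

theorem norm_coeff_monic_mul_le {P q : R[X]} (hP : P.Monic) {c A : ℝ}
    (hc : ∑ u ∈ range P.natDegree, ‖P.coeff u‖ ≤ c) (hc1 : c < 1)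
    (hA : ∀ n, ‖(P * q).coeff n‖ ≤ A) {i : ℕ} (hi : i < P.natDegree) :
    ‖(P * q).coeff i‖ ≤ c * A / (1 - c) := by
  have hq : ∀ n, ‖q.coeff n‖ ≤ A / (1 - c) := fun n => by
    rw [le_div_iff₀ (sub_pos.2 hc1), mul_comm]
    exact norm_coeff_le_of_monic_mul hP hc hc1.le hA n
  have hA0 : 0 ≤ A / (1 - c) := (norm_nonneg _).trans (hq 0)
  calc _ ≤ (∑ u ∈ range P.natDegree, ‖P.coeff u‖) * (A / (1 - c)) := norm_coeff_mul_le hq hi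
    _ ≤ c * (A / (1 - c)) := by gcongr
    _ = c * A / (1 - c) := (mul_div_assoc _ _ _).symm

end NormedRing

section NormedField

variable {K ι : Type*} [NormedField K]

theorem norm_coeff_prod_X_sub_C_le (s : Finset ι) (r : ι → K) {δ : ℝ}
    (hr : ∀ i ∈ s, ‖r i‖ ≤ δ) {u : ℕ} (hu : u ≤ #s) :
    ‖(∏ i ∈ s, (X - C (r i))).coeff u‖ ≤ (#s).choose (#s - u) * δ ^ (#s - u) := by
  simp_rw [sub_eq_add_neg, ← map_neg C]
  rw [s.prod_X_add_C_coeff _ hu]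
  calc _ ≤ ∑ t ∈ s.powersetCard (#s - u), ‖∏ i ∈ t, -r i‖ := norm_sum_le _ _
    _ ≤ ∑ t ∈ s.powersetCard (#s - u), δ ^ (#s - u) := sum_le_sum fun t ht => by
        obtain ⟨hts, htcard⟩ := mem_powersetCard.mp ht
        rw [norm_prod, ← htcard, ← prod_const]
        exact prod_le_prod (fun _ _ => norm_nonneg _)
          fun i hi => (norm_neg (r i)).trans_le (hr i (hts hi))
    _ = _ := by rw [sum_const, card_powersetCard, nsmul_eq_mul]

theorem sum_norm_coeff_prod_X_sub_C_le (s : Finset ι) (r : ι → K) {δ : ℝ} (hδ : 0 ≤ δ)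
    (hr : ∀ i ∈ s, ‖r i‖ ≤ δ) (h1 : #s * δ < 1) :
    ∑ u ∈ range #s, ‖(∏ i ∈ s, (X - C (r i))).coeff u‖ ≤ #s * δ / (1 - #s * δ) := by
  set t : ℝ := #s * δ
  have ht : 0 ≤ t := by positivity
  calc _ ≤ ∑ u ∈ range #s, t ^ (#s - u) := sum_le_sum fun u hu => by
        refine (norm_coeff_prod_X_sub_C_le s r hr (mem_range.1 hu).le).trans ?_
        rw [mul_pow]
        gcongr
        exact_mod_cast Nat.choose_le_pow _ _
    _ = t * ∑ j ∈ range #s, t ^ j := by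
        rw [← sum_range_reflect, mul_sum]
        refine sum_congr rfl fun j hj => ?_
        rw [← pow_succ']
        congr 1
        have := mem_range.1 hj
        omega
    _ ≤ t * (t ^ 0 / (1 - t)) := by
        gcongr
        rw [range_eq_Ico]
        exact geom_sum_Ico_le_of_lt_one ht h1
    _ = t / (1 - t) := by rw [pow_zero, mul_one_div]

theorem norm_coeff_le_of_prod_X_sub_C_dvd (s : Finset ι) (r : ι → K) {δ A : ℝ} (hδ : 0 ≤ δ)
    (hr : ∀ i ∈ s, ‖r i‖ ≤ δ) (hsδ : #s * δ ≤ 1 / 3) {p : K[X]}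
    (hdvd : ∏ i ∈ s, (X - C (r i)) ∣ p) (hA : ∀ n, ‖p.coeff n‖ ≤ A) {i : ℕ} (hi : i < #s) :
    ‖p.coeff i‖ ≤ 3 * (#s * δ) * A := by
  obtain ⟨q, rfl⟩ := hdvd
  set t : ℝ := #s * δ
  have ht : 0 ≤ t := by positivity
  have hA0 : 0 ≤ A := (norm_nonneg _).trans (hA 0)
  have hdeg : (∏ i ∈ s, (X - C (r i))).natDegree = #s := natDegree_finsetProd_X_sub_C_eq_card s r
  have hc : ∑ u ∈ range (∏ i ∈ s, (X - C (r i))).natDegree,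
      ‖(∏ i ∈ s, (X - C (r i))).coeff u‖ ≤ t / (1 - t) := by
    rw [hdeg]
    exact sum_norm_coeff_prod_X_sub_C_le s r hδ hr (by linarith)
  calc _ ≤ t / (1 - t) * A / (1 - t / (1 - t)) :=
        norm_coeff_monic_mul_le (monic_prod_X_sub_C _ _) hc
          (by rw [div_lt_one (by linarith)]; linarith) hA (hdeg ▸ hi)
    _ = t * A / (1 - 2 * t) := by
      have : 1 - t ≠ 0 := by linarith
      field_simp
      ring
    _ ≤ 3 * t * A := by
      rw [div_le_iff₀ (by linarith)]
      nlinarith [mul_nonneg (mul_nonneg ht hA0) (by linarith : 0 ≤ 1 - 3 * t)]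

end NormedField

theorem norm_coeff_ofFn_le {R : Type*} [NormedRing R] [DecidableEq R] {k : ℕ} {x : Fin k → R}
    {A : ℝ} (hA : 0 ≤ A) (hx : ∀ r, ‖x r‖ ≤ A) (n : ℕ) : ‖(ofFn k x).coeff n‖ ≤ A := by
  by_cases hn : n < k
  · simpa [hn] using hx _
  · simpa [not_lt.1 hn] using hA

theorem prod_X_sub_C_dvd_of_isRoot {K ι : Type*} [Field K] [Fintype ι] {r : ι → K}
    (hr : Function.Injective r) {p : K[X]} (hp : ∀ i, p.IsRoot (r i)) :
    ∏ i, (X - C (r i)) ∣ p :=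
  prod_dvd_of_coprime ((pairwise_coprime_X_sub_C hr).set_pairwise _) fun i _ =>
    dvd_iff_isRoot.mpr (hp i)

end Polynomial

theorem vecMul_vander_apply {m : ℕ} (lam : Fin m → ℝ) (k : ℕ) (x : Fin k → ℝ) (j : Fin m) :
    (x ᵥ* vander lam k) j = (ofFn k x).eval (lam j) := by
  simp [vecMul, dotProduct, vander, ofFn_eq_sum_monomial, eval_finsetSum]

theorem prod_X_sub_C_dvd_ofFn_of_vecMul_vander_eq_zero {m k : ℕ} {lam : Fin m → ℝ}
    (hlam : Function.Injective lam) {x : Fin k → ℝ} (hx : x ᵥ* vander lam k = 0) :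
    ∏ j, (X - C (lam j)) ∣ ofFn k x :=
  prod_X_sub_C_dvd_of_isRoot hlam fun j => by
    rw [IsRoot, ← vecMul_vander_apply, hx, Pi.zero_apply]

theorem null_space_entries_small_general {m k : ℕ} (hk : m < k)
    (R ε : ℝ) (hR : 0 < R) (hε0 : 0 < ε)
    (lam : Fin m → ℝ) (hdist : Function.Injective lam)
    (hlam : ∀ j, |lam j| < ε / (3 * R * ((k : ℝ) - m) * m))
    (x : Fin k → ℝ) (hxnorm : Real.sqrt (∑ i, x i ^ 2) ≤ R)
    (hnull : x ᵥ* (vander lam k) = 0) :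
    ∀ i : Fin k, (i : ℕ) < m → |x i| ≤ ε := by
  intro i hi
  have hxR : ∀ r, |x r| ≤ R := fun r =>
    (Real.abs_le_sqrt (single_le_sum (fun j _ => sq_nonneg (x j)) (mem_univ r))).trans hxnorm
  rcases le_total R ε with hRε | hεR
  · exact (hxR i).trans hRε
  have hkm : (1 : ℝ) ≤ k - m := by
    have : (m : ℝ) + 1 ≤ k := by exact_mod_cast hk
    linarith
  have hm : (m : ℝ) ≠ 0 := by
    have : 0 < m := by omega
    positivity
  have hmδ : #(univ : Finset (Fin m)) * (ε / (3 * R * (k - m) * m)) = ε / (3 * R * (k - m)) := by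
    rw [card_univ, Fintype.card_fin]
    field_simp
  have hmδ3 : ε / (3 * R * (k - m)) ≤ 1 / 3 := by
    rw [div_le_iff₀ (by positivity)]
    nlinarith
  have hsmall := norm_coeff_le_of_prod_X_sub_C_dvd univ lam (by positivity)
    (fun j _ => (hlam j).le) (hmδ ▸ hmδ3)
    (prod_X_sub_C_dvd_ofFn_of_vecMul_vander_eq_zero hdist hnull)
    (norm_coeff_ofFn_le hR.le hxR) (i := i) (by simpa using hi)
  calc |x i| = ‖(ofFn k x).coeff i‖ := by simp
    _ ≤ 3 * (ε / (3 * R * (k - m))) * R := by rwa [hmδ] at hsmall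
    _ = ε / (k - m) := by field_simp
    _ ≤ ε := div_le_self hε0.le hkm

theorem null_space_entries_small {m k : ℕ} (hm : 1 ≤ m) (hk : m < k)
    (R ε : ℝ) (hR : 0 < R) (hε0 : 0 < ε) (hε2 : ε ≤ min 2 (3 * R))
    (lam : Fin m → ℝ) (hdist : Function.Injective lam)
    (hlam : ∀ j, |lam j| < ε / (3 * R * ((k : ℝ) - m) * m))
    (x : Fin k → ℝ) (hxnorm : Real.sqrt (∑ i, x i ^ 2) ≤ R)
    (hnull : x ᵥ* (vander lam k) = 0) :
    ∀ i : Fin k, (i : ℕ) < m → |x i| ≤ ε :=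
  null_space_entries_small_general hk R ε hR hε0 lam hdist hlam x hxnorm hnull
end

section
/- Suppose m divides n, A ∈ ℝ^{n×n} is partitioned into column blocks A_1,…,A_m ∈ ℝ^{n×(n/m)} and B ∈ ℝ^{n×n} into row blocks B_1,…,B_m ∈ ℝ^{(n/m)×n}, and ‖A‖_F ≤ η, ‖B‖_F ≤ η. Then for every entry position (v,w) with v,w ∈ {1,…,n}, the vector of MatDot coefficients at that entry satisfies (Σ_{l=1}^{2m−1} P_l[v,w]²)^{1/2} ≤ √(2m−1) · η². -/
/-! Fix an entry `(v, w)`. The entry `P_l[v,w]` is a sum of inner products between the slice of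
row `v` of `A` lying in block `i` and the slice of column `w` of `B` lying in block `j`, over the
pairs `(i, j)` with `i - j = l - m`. These pairs form a partial matching, so Cauchy–Schwarz bounds
`P_l[v,w]²` by `‖row v of A‖² ‖column w of B‖² ≤ η⁴`, and there are `2m - 1` coefficients. -/

open Matrix

/-- Frobenius norm of a real matrix. -/
noncomputable def frobNorm {α β : Type*} [Fintype α] [Fintype β] (M : Matrix α β ℝ) : ℝ :=
  Real.sqrt (∑ i, ∑ j, M i j ^ 2)

/-- The `i`-th column block `A_i ∈ ℝ^{n × (n/m)}` of `A ∈ ℝ^{n × n}` (with `n = m * t`,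
columns indexed as `Fin m × Fin t`). Here `i : Fin m` is 0-indexed. -/
def colBlk {m t : ℕ} (A : Matrix (Fin (m * t)) (Fin m × Fin t) ℝ) (i : Fin m) :
    Matrix (Fin (m * t)) (Fin t) ℝ :=
  Matrix.of fun v c => A v (i, c)

/-- The `j`-th row block `B_j ∈ ℝ^{(n/m) × n}` of `B ∈ ℝ^{n × n}`. -/
def rowBlk {m t : ℕ} (B : Matrix (Fin m × Fin t) (Fin (m * t)) ℝ) (j : Fin m) :
    Matrix (Fin t) (Fin (m * t)) ℝ :=
  Matrix.of fun c w => B (j, c) w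

/-- The `l`-th MatDot coefficient matrix (`l` is 1-indexed, `l ∈ {1, …, 2m-1}`):
`P_l = Σ_{i,j ∈ {1,…,m}, i − j = l − m} A_i B_j`.  Here the blocks `i j : Fin m` are
0-indexed, so the defining condition `(i+1) − (j+1) = l − m` reads `i − j = l − m` in `ℤ`. -/
noncomputable def matDotCoeff {m t : ℕ}
    (A : Matrix (Fin (m * t)) (Fin m × Fin t) ℝ)
    (B : Matrix (Fin m × Fin t) (Fin (m * t)) ℝ) (l : ℕ) :
    Matrix (Fin (m * t)) (Fin (m * t)) ℝ :=
  ∑ i : Fin m, ∑ j : Fin m,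
    if (i : ℤ) - (j : ℤ) = (l : ℤ) - (m : ℤ) then colBlk A i * rowBlk B j else 0

open Finset

lemma Finset.sum_le_univ_sum_of_injOn {α β M : Type*} [Fintype β] [DecidableEq β]
    [AddCommMonoid M] [PartialOrder M] [IsOrderedAddMonoid M]
    {s : Finset α} {φ : α → β} (hφ : Set.InjOn φ s) {f : β → M} (hf : ∀ y, 0 ≤ f y) :
    ∑ x ∈ s, f (φ x) ≤ ∑ y, f y := by
  rw [← sum_image hφ]
  exact sum_le_univ_sum_of_nonneg hf

lemma sq_sum_inner_le_of_injOn {ι κ τ : Type*} [Fintype ι] [DecidableEq ι] [Fintype κ]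
    [DecidableEq κ] [Fintype τ] {S : Finset (ι × κ)}
    (h₁ : Set.InjOn Prod.fst (S : Set (ι × κ))) (h₂ : Set.InjOn Prod.snd (S : Set (ι × κ)))
    (a : ι → τ → ℝ) (b : κ → τ → ℝ) :
    (∑ p ∈ S, ∑ c, a p.1 c * b p.2 c) ^ 2 ≤ (∑ i, ∑ c, a i c ^ 2) * (∑ j, ∑ c, b j c ^ 2) := by
  calc (∑ p ∈ S, ∑ c, a p.1 c * b p.2 c) ^ 2
      = (∑ q ∈ S ×ˢ univ, a q.1.1 q.2 * b q.1.2 q.2) ^ 2 := by rw [sum_product]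
    _ ≤ (∑ q ∈ S ×ˢ univ, a q.1.1 q.2 ^ 2) * ∑ q ∈ S ×ˢ univ, b q.1.2 q.2 ^ 2 :=
      sum_mul_sq_le_sq_mul_sq _ _ _
    _ = (∑ p ∈ S, ∑ c, a p.1 c ^ 2) * ∑ p ∈ S, ∑ c, b p.2 c ^ 2 := by
      rw [sum_product, sum_product]
    _ ≤ (∑ i, ∑ c, a i c ^ 2) * ∑ j, ∑ c, b j c ^ 2 :=
      mul_le_mul
        (sum_le_univ_sum_of_injOn h₁ (f := fun i => ∑ c, a i c ^ 2) fun _ => by positivity)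
        (sum_le_univ_sum_of_injOn h₂ (f := fun j => ∑ c, b j c ^ 2) fun _ => by positivity)
        (by positivity) (by positivity)

lemma sum_sq_le_of_frobNorm_le {α β : Type*} [Fintype α] [Fintype β] {M : Matrix α β ℝ} {η : ℝ}
    (h : frobNorm M ≤ η) : ∑ i, ∑ j, M i j ^ 2 ≤ η ^ 2 := by
  rw [← Real.sq_sqrt (by positivity : 0 ≤ ∑ i, ∑ j, M i j ^ 2)]
  exact pow_le_pow_left₀ (Real.sqrt_nonneg _) h 2

lemma sum_row_sq_le_of_frobNorm_le {α β : Type*} [Fintype α] [Fintype β] {M : Matrix α β ℝ}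
    {η : ℝ} (h : frobNorm M ≤ η) (i : α) : ∑ j, M i j ^ 2 ≤ η ^ 2 :=
  (single_le_sum (fun i _ => sum_nonneg fun j _ => sq_nonneg (M i j)) (mem_univ i)).trans
    (sum_sq_le_of_frobNorm_le h)

lemma sum_col_sq_le_of_frobNorm_le {α β : Type*} [Fintype α] [Fintype β] {M : Matrix α β ℝ}
    {η : ℝ} (h : frobNorm M ≤ η) (j : β) : ∑ i, M i j ^ 2 ≤ η ^ 2 :=
  (sum_le_sum fun i _ => single_le_sum (fun j _ => sq_nonneg (M i j)) (mem_univ j)).trans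
    (sum_sq_le_of_frobNorm_le h)

def matDotPairs (m l : ℕ) : Finset (Fin m × Fin m) :=
  univ.filter fun p => (p.1 : ℤ) - p.2 = l - m

lemma matDotCoeff_apply {m t : ℕ} (A : Matrix (Fin (m * t)) (Fin m × Fin t) ℝ)
    (B : Matrix (Fin m × Fin t) (Fin (m * t)) ℝ) (l : ℕ) (v w : Fin (m * t)) :
    matDotCoeff A B l v w = ∑ p ∈ matDotPairs m l, ∑ c, A v (p.1, c) * B (p.2, c) w := by
  simp only [matDotCoeff, matDotPairs, sum_filter, Fintype.sum_prod_type, Matrix.sum_apply]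
  refine sum_congr rfl fun i _ => sum_congr rfl fun j _ => ?_
  split_ifs <;> simp [Matrix.mul_apply, colBlk, rowBlk]

lemma injOn_fst_matDotPairs (m l : ℕ) :
    Set.InjOn Prod.fst (matDotPairs m l : Set (Fin m × Fin m)) := by
  intro p hp q hq h
  simp only [matDotPairs, coe_filter, mem_univ, true_and, Set.mem_ofPred_eq] at hp hq
  ext <;> omega

lemma injOn_snd_matDotPairs (m l : ℕ) :
    Set.InjOn Prod.snd (matDotPairs m l : Set (Fin m × Fin m)) := by
  intro p hp q hq h
  simp only [matDotPairs, coe_filter, mem_univ, true_and, Set.mem_ofPred_eq] at hp hq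
  ext <;> omega

lemma matDotCoeff_apply_sq_le {m t : ℕ} {η : ℝ} {A : Matrix (Fin (m * t)) (Fin m × Fin t) ℝ}
    {B : Matrix (Fin m × Fin t) (Fin (m * t)) ℝ} (hA : frobNorm A ≤ η) (hB : frobNorm B ≤ η)
    (l : ℕ) (v w : Fin (m * t)) : matDotCoeff A B l v w ^ 2 ≤ (η ^ 2) ^ 2 := by
  rw [matDotCoeff_apply]
  calc _ ≤ (∑ i, ∑ c, A v (i, c) ^ 2) * ∑ j, ∑ c, B (j, c) w ^ 2 :=
        sq_sum_inner_le_of_injOn (injOn_fst_matDotPairs m l) (injOn_snd_matDotPairs m l)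
          (fun i c => A v (i, c)) (fun j c => B (j, c) w)
    _ ≤ η ^ 2 * η ^ 2 := by
        rw [← Fintype.sum_prod_type', ← Fintype.sum_prod_type']
        exact mul_le_mul (sum_row_sq_le_of_frobNorm_le hA v) (sum_col_sq_le_of_frobNorm_le hB w)
          (by positivity) (by positivity)
    _ = (η ^ 2) ^ 2 := by ring

lemma Real.sqrt_sum_sq_le_sqrt_card_mul {α : Type*} {s : Finset α} {x : α → ℝ} {c : ℝ}
    (hc : 0 ≤ c) (h : ∀ a ∈ s, x a ^ 2 ≤ c ^ 2) : √(∑ a ∈ s, x a ^ 2) ≤ √(#s : ℝ) * c := by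
  calc √(∑ a ∈ s, x a ^ 2) ≤ √(#s * c ^ 2) := by
        refine Real.sqrt_le_sqrt ((sum_le_sum h).trans ?_)
        rw [sum_const, nsmul_eq_mul]
    _ = √(#s : ℝ) * c := by rw [Real.sqrt_mul (Nat.cast_nonneg _), Real.sqrt_sq hc]

-- At `k = 0` both sides are junk `0`: truncated subtraction on the left, `√` of `-1` on the right.
lemma Real.sqrt_natCast_sub_one (k : ℕ) : √((k - 1 : ℕ) : ℝ) = √((k : ℝ) - 1) := by
  cases k with
  | zero => simp [Real.sqrt_eq_zero_of_nonpos]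
  | succ k => simp

theorem matdot_coeff_vector_norm_bound_general {m t : ℕ} (η : ℝ)
    (A : Matrix (Fin (m * t)) (Fin m × Fin t) ℝ)
    (B : Matrix (Fin m × Fin t) (Fin (m * t)) ℝ)
    (hA : frobNorm A ≤ η) (hB : frobNorm B ≤ η) :
    ∀ v w : Fin (m * t),
      Real.sqrt (∑ l ∈ Finset.Icc 1 (2 * m - 1), (matDotCoeff A B l v w) ^ 2)
        ≤ Real.sqrt (2 * (m : ℝ) - 1) * η ^ 2 := by
  intro v w
  have hcard : √(#(Icc 1 (2 * m - 1)) : ℝ) = √(2 * (m : ℝ) - 1) := by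
    rw [Nat.card_Icc, Nat.add_sub_cancel, Real.sqrt_natCast_sub_one]
    norm_num
  rw [← hcard]
  exact Real.sqrt_sum_sq_le_sqrt_card_mul (sq_nonneg η) fun l _ =>
    matDotCoeff_apply_sq_le hA hB l v w

theorem matdot_coeff_vector_norm_bound {m t : ℕ} (hm : 1 ≤ m) (η : ℝ)
    (A : Matrix (Fin (m * t)) (Fin m × Fin t) ℝ)
    (B : Matrix (Fin m × Fin t) (Fin (m * t)) ℝ)
    (hA : frobNorm A ≤ η) (hB : frobNorm B ≤ η) :
    ∀ v w : Fin (m * t),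
      Real.sqrt (∑ l ∈ Finset.Icc 1 (2 * m - 1), (matDotCoeff A B l v w) ^ 2)
        ≤ Real.sqrt (2 * (m : ℝ) - 1) * η ^ 2 :=
  matdot_coeff_vector_norm_bound_general η A B hA hB
end

section
/- Let k > m ≥ 1 be integers, let a_0,…,a_{k−1} ∈ ℝ, and let f(x) = Σ_{j=0}^{k−1} a_j x^j. Let x_1,…,x_m be distinct real numbers satisfying |x_i| ≤ δ for all i, where 0 < δ < 1/m. Let V be the m×m Vandermonde matrix with V[i,j] = x_i^{j−1} (which is invertible since the x_i are distinct), and define (â_0,…,â_{m−1})ᵀ = V⁻¹ (f(x_1),…,f(x_m))ᵀ. Then |â_{m−1} − a_{m−1}| ≤ (max_{0≤j≤k−1} |a_j|) · (k−m) · m · δ. -/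
/-!
The last coordinate of `V⁻¹ (f(x_i))_i` is the leading coefficient of the interpolating
polynomial, i.e. the divided difference `f[x_1, …, x_m]`, which is linear in `f`. For the monomial
`z ^ j` it is `0` when `j < m - 1`, `1` when `j = m - 1`, and for `j ≥ m` it is the complete
homogeneous symmetric polynomial `h_{j-m+1}(x_1, …, x_m)`, because both sides obey the same
recursion when two nodes are removed in turn. With `|x_i| ≤ δ` we get `|h_d| ≤ (mδ)^d ≤ mδ`, and
there are `k - m` monomials of degree at least `m`.
-/

open Finset

section CompleteHomogeneous

variable {R : Type*} [CommRing R]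

/-- `completeHomogeneous l d` is the value of the complete homogeneous symmetric polynomial
`h_d` at the entries of `l`. -/
def completeHomogeneous : List R → ℕ → R
  | _, 0 => 1
  | [], _ + 1 => 0
  | y :: ys, d + 1 => completeHomogeneous ys (d + 1) + y * completeHomogeneous (y :: ys) d
  termination_by l d => (l.length, d)

@[simp] lemma completeHomogeneous_zero (l : List R) : completeHomogeneous l 0 = 1 := by
  cases l <;> rw [completeHomogeneous]

@[simp] lemma completeHomogeneous_nil_succ (d : ℕ) :
    completeHomogeneous ([] : List R) (d + 1) = 0 := by
  rw [completeHomogeneous]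

lemma completeHomogeneous_cons_succ (y : R) (ys : List R) (d : ℕ) :
    completeHomogeneous (y :: ys) (d + 1) =
      completeHomogeneous ys (d + 1) + y * completeHomogeneous (y :: ys) d := by
  rw [completeHomogeneous]

@[simp] lemma completeHomogeneous_singleton (y : R) (d : ℕ) :
    completeHomogeneous [y] d = y ^ d := by
  induction d with
  | zero => simp
  | succ d ih => rw [completeHomogeneous_cons_succ, ih]; simp [pow_succ, mul_comm]

lemma completeHomogeneous_cons_sub_cons (u v : R) (l : List R) (d : ℕ) :
    completeHomogeneous (u :: l) (d + 1) - completeHomogeneous (v :: l) (d + 1) =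
      (u - v) * completeHomogeneous (u :: v :: l) d := by
  induction d with
  | zero => simp [completeHomogeneous_cons_succ]
  | succ d ih =>
    rw [completeHomogeneous_cons_succ u, completeHomogeneous_cons_succ v,
      completeHomogeneous_cons_succ u (v :: l)]
    linear_combination u * ih

lemma abs_completeHomogeneous_le [LinearOrder R] [IsStrictOrderedRing R] {δ : R} (l : List R)
    (hl : ∀ y ∈ l, |y| ≤ δ) (d : ℕ) :
    |completeHomogeneous l d| ≤ (l.length * δ) ^ d := by
  induction l generalizing d with
  | nil => cases d <;> simp
  | cons y ys ih =>
    have hy : |y| ≤ δ := hl y List.mem_cons_self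
    have hδ : 0 ≤ δ := (abs_nonneg y).trans hy
    have ih := ih fun z hz => hl z (List.mem_cons_of_mem y hz)
    induction d with
    | zero => simp
    | succ d ihd =>
      have hn : ((ys.length : R) * δ) ^ d ≤ (((ys.length : R) + 1) * δ) ^ d :=
        pow_le_pow_left₀ (by positivity) (by linarith) d
      calc |completeHomogeneous (y :: ys) (d + 1)|
          ≤ |completeHomogeneous ys (d + 1)| + |y| * |completeHomogeneous (y :: ys) d| := by
            rw [completeHomogeneous_cons_succ, ← abs_mul]; exact abs_add_le _ _
        _ ≤ (ys.length * δ) ^ (d + 1) + δ * (((ys.length : R) + 1) * δ) ^ d := by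
            gcongr
            · exact ih (d + 1)
            · simpa using ihd
        _ ≤ (((ys.length : R) + 1) * δ) ^ (d + 1) := by
            rw [pow_succ, pow_succ _ d]
            nlinarith [mul_le_mul_of_nonneg_right hn (by positivity : (0:R) ≤ ys.length * δ)]
        _ = ((y :: ys).length * δ) ^ (d + 1) := by simp

end CompleteHomogeneous

section DividedDifference

variable {F ι : Type*} [Field F] [DecidableEq ι] {s : Finset ι} {v : ι → F}

/-- The divided difference `f[v i | i ∈ s]` in Lagrange form; by `Lagrange.coeff_eq_sum` it is the
coefficient of `X ^ (#s - 1)` in the polynomial interpolating `f` at the nodes. -/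
def dividedDiff (s : Finset ι) (v : ι → F) (f : F → F) : F :=
  ∑ i ∈ s, f (v i) / ∏ j ∈ s.erase i, (v i - v j)

@[simp] lemma dividedDiff_empty (v : ι → F) (f : F → F) : dividedDiff ∅ v f = 0 := by
  simp [dividedDiff]

@[simp] lemma dividedDiff_singleton (i : ι) (v : ι → F) (f : F → F) :
    dividedDiff {i} v f = f (v i) := by
  simp [dividedDiff]

lemma dividedDiff_sum_mul {κ : Type*} (s : Finset ι) (v : ι → F) (t : Finset κ) (c : κ → F)
    (g : κ → F → F) :
    dividedDiff s v (fun z => ∑ j ∈ t, c j * g j z) =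
      ∑ j ∈ t, c j * dividedDiff s v (g j) := by
  simp only [dividedDiff, sum_div, mul_sum, mul_div_assoc]
  exact sum_comm

lemma dividedDiff_erase (hv : Set.InjOn v s) {j : ι} (hj : j ∈ s) (f : F → F) :
    dividedDiff (s.erase j) v f =
      ∑ i ∈ s, f (v i) * (v i - v j) / ∏ l ∈ s.erase i, (v i - v l) := by
  rw [dividedDiff, ← sum_erase_add s _ hj, sub_self, mul_zero, zero_div, add_zero]
  refine sum_congr rfl fun i hi => ?_
  obtain ⟨hij, hi⟩ := mem_erase.mp hi
  have hvij : v i - v j ≠ 0 := sub_ne_zero.mpr fun h => hij (hv hi hj h)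
  rw [← mul_prod_erase (s.erase i) _ (mem_erase.mpr ⟨hij.symm, hj⟩), erase_right_comm,
    mul_comm (f (v i)), mul_div_mul_left _ _ hvij]

lemma sub_mul_dividedDiff (hv : Set.InjOn v s) {i j : ι} (hi : i ∈ s) (hj : j ∈ s)
    (f : F → F) :
    (v i - v j) * dividedDiff s v f =
      dividedDiff (s.erase j) v f - dividedDiff (s.erase i) v f := by
  rw [dividedDiff_erase hv hj, dividedDiff_erase hv hi, ← sum_sub_distrib, dividedDiff, mul_sum]
  refine sum_congr rfl fun l _ => ?_
  ring

lemma dividedDiff_pow_of_lt (hv : Set.InjOn v s) {j : ℕ} (hj : j + 1 < #s) :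
    dividedDiff s v (· ^ j) = 0 := by
  have h := Lagrange.coeff_eq_sum hv (P := Polynomial.X ^ j)
    (by rw [Polynomial.degree_X_pow]; exact_mod_cast (by omega : j < #s))
  rw [Polynomial.coeff_X_pow, if_neg (by omega)] at h
  simpa [dividedDiff] using h.symm

lemma dividedDiff_cons_pow_eq_completeHomogeneous (u : ι) (l : List ι) (hl : (u :: l).Nodup)
    (hv : Set.InjOn v (u :: l).toFinset) (d : ℕ) :
    dividedDiff (u :: l).toFinset v (· ^ (l.length + d)) =
      completeHomogeneous ((u :: l).map v) d := by
  induction l generalizing u d with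
  | nil => simp
  | cons w l ih =>
    obtain ⟨hwu, hwl⟩ := List.nodup_cons.mp hl
    have hul : (u :: l).Nodup := List.nodup_cons.mpr ⟨fun h => hwu (.tail w h), hwl.of_cons⟩
    have hu : u ∈ (u :: w :: l).toFinset := by simp
    have hw : w ∈ (u :: w :: l).toFinset := by simp
    have huw : v u - v w ≠ 0 := sub_ne_zero.mpr fun h => hwu (hv hu hw h ▸ .head l)
    have hsw : (u :: w :: l).toFinset.erase w = (u :: l).toFinset := by
      ext; simp only [mem_erase, List.mem_toFinset, List.mem_cons]; grind
    have hsu : (u :: w :: l).toFinset.erase u = (w :: l).toFinset := by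
      ext; simp only [mem_erase, List.mem_toFinset, List.mem_cons]; grind
    have hvu : Set.InjOn v (u :: l).toFinset := hv.mono (coe_subset.mpr (hsw ▸ erase_subset _ _))
    have hvw : Set.InjOn v (w :: l).toFinset := hv.mono (coe_subset.mpr (hsu ▸ erase_subset _ _))
    have key := sub_mul_dividedDiff hv hu hw (· ^ (l.length + (d + 1)))
    rw [hsw, hsu, ih u hul hvu, ih w hwl hvw, List.map_cons, List.map_cons,
      completeHomogeneous_cons_sub_cons] at key
    rw [List.length_cons, add_right_comm, add_assoc]
    exact mul_left_cancel₀ huw key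

lemma dividedDiff_pow_eq_completeHomogeneous (hv : Set.InjOn v s) (hs : s.Nonempty) (d : ℕ) :
    dividedDiff s v (· ^ (#s - 1 + d)) = completeHomogeneous (s.toList.map v) d := by
  obtain ⟨u, l, hul⟩ := List.exists_cons_of_ne_nil (toList_eq_nil.not.mpr hs.ne_empty)
  have hl : (u :: l).Nodup := hul ▸ s.nodup_toList
  have hsl : (u :: l).toFinset = s := hul ▸ s.toList_toFinset
  subst hsl
  rw [hul, List.card_toFinset, hl.dedup, List.length_cons, Nat.add_sub_cancel]
  exact dividedDiff_cons_pow_eq_completeHomogeneous u l hl hv d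

open Matrix Polynomial in
lemma vandermonde_inv_mulVec_apply_eq_dividedDiff {m : ℕ} (hm : 1 ≤ m) {x : Fin m → F}
    (hx : Function.Injective x) (f : F → F) :
    ((vandermonde x)⁻¹ *ᵥ fun i => f (x i)) ⟨m - 1, by omega⟩ = dividedDiff univ x f := by
  set c := (vandermonde x)⁻¹ *ᵥ fun i => f (x i)
  have hc : vandermonde x *ᵥ c = fun i => f (x i) := by
    rw [mulVec_mulVec, mul_nonsing_inv _ (det_vandermonde_ne_zero_iff.mpr hx).isUnit, one_mulVec]
  set P : F[X] := ∑ t : Fin m, C (c t) * X ^ (t : ℕ)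
  have hcoeff : P.coeff (m - 1) = c ⟨m - 1, by omega⟩ := by
    simp only [P, finsetSum_coeff, coeff_C_mul_X_pow]
    rw [Fintype.sum_eq_single ⟨m - 1, by omega⟩ fun t ht => if_neg fun h => ht (Fin.ext h.symm),
      if_pos rfl]
  have heval (i : Fin m) : P.eval (x i) = f (x i) := by
    rw [← congrFun hc i]
    simp only [P, eval_finsetSum, eval_mul, eval_C, eval_pow, eval_X, mulVec, dotProduct,
      vandermonde_apply]
    exact sum_congr rfl fun _ _ => mul_comm _ _
  have hP := Lagrange.coeff_eq_sum (s := univ) hx.injOn (P := P)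
    (by simpa using degree_sum_fin_lt c)
  rw [← hcoeff]
  simpa [heval, dividedDiff] using hP

end DividedDifference

section Bound

variable {R ι : Type*} [Field R] [LinearOrder R] [IsStrictOrderedRing R] [DecidableEq ι]
  {s : Finset ι} {v : ι → R} {δ : R}

lemma abs_dividedDiff_pow_sub_le (hv : Set.InjOn v s) (hvδ : ∀ i ∈ s, |v i| ≤ δ)
    (hsδ : #s * δ ≤ 1) (j : ℕ) :
    |dividedDiff s v (· ^ j) - if j + 1 = #s then 1 else 0| ≤
      if #s ≤ j then #s * δ else 0 := by
  rcases s.eq_empty_or_nonempty with rfl | hs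
  · simp
  have hcard := hs.card_pos
  have hδ : 0 ≤ δ := (abs_nonneg _).trans (hvδ _ hs.choose_spec)
  obtain hj | ⟨d, rfl⟩ : j + 1 < #s ∨ ∃ d, j = #s - 1 + d :=
    (lt_or_ge (j + 1) #s).imp_right fun h => ⟨j + 1 - #s, by omega⟩
  · rw [dividedDiff_pow_of_lt hv hj, if_neg hj.ne, if_neg (by omega)]
    simp
  rw [dividedDiff_pow_eq_completeHomogeneous hv hs]
  cases d with
  | zero => simp [Nat.sub_add_cancel hcard, show ¬#s ≤ #s - 1 by omega]
  | succ d =>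
    rw [if_neg (by omega), if_pos (by omega), sub_zero]
    calc |completeHomogeneous (s.toList.map v) (d + 1)|
        ≤ (#s * δ) ^ (d + 1) := by
          have hlδ : ∀ y ∈ s.toList.map v, |y| ≤ δ := by
            simpa only [List.forall_mem_map, mem_toList] using hvδ
          simpa using abs_completeHomogeneous_le _ hlδ (d + 1)
      _ ≤ #s * δ := pow_le_of_le_one (by positivity) hsδ (by omega)

end Bound

lemma Fin.card_filter_le_val (n m : ℕ) : #{i : Fin n | m ≤ (i : ℕ)} = n - m := by
  have h := card_filter_add_card_filter_not (s := univ) fun i : Fin n => (i : ℕ) < m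
  simp only [Fin.card_filter_val_lt, not_lt, card_univ, Fintype.card_fin] at h
  omega

open Matrix

theorem interpolation_middle_coeff_bound {m k : ℕ} (hm : 1 ≤ m) (hk : m < k)
    (a : Fin k → ℝ) (x : Fin m → ℝ) (hdist : Function.Injective x)
    (δ : ℝ) (hδ1 : δ < 1 / m) (hxd : ∀ i, |x i| ≤ δ)
    (ahat : Fin m → ℝ)
    (hhat : ahat = (Matrix.of fun i j : Fin m => x i ^ (j : ℕ))⁻¹ *ᵥ
      (fun i => ∑ j : Fin k, a j * x i ^ (j : ℕ))) :
    |ahat ⟨m - 1, by omega⟩ - a ⟨m - 1, by omega⟩|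
      ≤ (Finset.univ.sup' ⟨⟨0, by omega⟩, Finset.mem_univ _⟩ fun j : Fin k => |a j|)
          * ((k : ℝ) - m) * m * δ := by
  set A := univ.sup' ⟨⟨0, by omega⟩, mem_univ _⟩ fun j : Fin k => |a j|
  set c : Fin k → ℝ := fun j =>
    dividedDiff univ x (· ^ (j : ℕ)) - if (j : ℕ) + 1 = m then 1 else 0
  have hmδ : (m : ℝ) * δ ≤ 1 := by
    rw [lt_div_iff₀ (by exact_mod_cast hm)] at hδ1
    linarith
  have hc (j : Fin k) : |c j| ≤ if m ≤ (j : ℕ) then m * δ else 0 := by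
    simpa using abs_dividedDiff_pow_sub_le (s := univ) hdist.injOn (fun i _ => hxd i)
      (by simpa using hmδ) j
  have hahat : ahat ⟨m - 1, by omega⟩ - a ⟨m - 1, by omega⟩ = ∑ j, a j * c j := by
    have h := vandermonde_inv_mulVec_apply_eq_dividedDiff hm hdist
      fun z => ∑ j : Fin k, a j * z ^ (j : ℕ)
    beta_reduce at h
    rw [hhat, ← vandermonde, h, dividedDiff_sum_mul]
    simp only [c, mul_sub, sum_sub_distrib, mul_ite, mul_one, mul_zero]
    rw [Fintype.sum_eq_single ⟨m - 1, by omega⟩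
      fun j hj => if_neg fun h => hj (Fin.ext (by simp; omega)), if_pos (by simp; omega)]
  calc |ahat ⟨m - 1, by omega⟩ - a ⟨m - 1, by omega⟩|
      ≤ ∑ j, |a j| * |c j| := by
        rw [hahat]
        exact (abs_sum_le_sum_abs _ _).trans_eq (by simp_rw [abs_mul])
    _ ≤ ∑ j : Fin k, A * if m ≤ (j : ℕ) then (m * δ : ℝ) else 0 := by
      gcongr with j
      · exact (abs_nonneg _).trans (le_sup' (fun j : Fin k => |a j|) (mem_univ ⟨0, by omega⟩))
      · exact le_sup' (fun j : Fin k => |a j|) (mem_univ j)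
      · exact hc j
    _ = A * ((k : ℝ) - m) * m * δ := by
      rw [← mul_sum, sum_ite, sum_const_zero, add_zero, sum_const, Fin.card_filter_le_val,
        nsmul_eq_mul, Nat.cast_sub hk.le]
      ring
end

section
/- Suppose p and q divide n, A ∈ ℝ^{n×n} is partitioned into a p×q grid of blocks A_{i,j} ∈ ℝ^{(n/p)×(n/q)} (i ∈ {1,…,p}, j ∈ {1,…,q}), B ∈ ℝ^{n×n} is partitioned into a q×p grid of blocks B_{k,l} ∈ ℝ^{(n/q)×(n/p)} (k ∈ {1,…,q}, l ∈ {1,…,p}), and ‖A‖_F ≤ η, ‖B‖_F ≤ η. For an integer d ≥ 0, let P_d = Σ A_{i,j} B_{k,l} ∈ ℝ^{(n/p)×(n/p)}, where the sum is over all (i,j,k,l) ∈ {1,…,p}×{1,…,q}×{1,…,q}×{1,…,p} with q(i−1) + (j−1) + (q−k) + pq(l−1) = d. Then every entry of P_d has absolute value at most η², i.e., |P_d[v,w]| ≤ η² for all v, w. -/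
open Matrix

/-- Block `A_{i,j} ∈ ℝ^{(n/p) × (n/q)}` of `A ∈ ℝ^{n × n}` (rows indexed `Fin p × Fin sp`,
columns `Fin q × Fin sq`, where `sp = n/p`, `sq = n/q`). Indices `i, j` are 0-indexed. -/
def blkA {p q sp sq : ℕ} (A : Matrix (Fin p × Fin sp) (Fin q × Fin sq) ℝ)
    (i : Fin p) (j : Fin q) : Matrix (Fin sp) (Fin sq) ℝ :=
  Matrix.of fun v c => A (i, v) (j, c)

/-- Block `B_{k,l} ∈ ℝ^{(n/q) × (n/p)}` of `B ∈ ℝ^{n × n}`. Indices `k, l` are 0-indexed. -/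
def blkB {p q sp sq : ℕ} (B : Matrix (Fin q × Fin sq) (Fin p × Fin sp) ℝ)
    (k : Fin q) (l : Fin p) : Matrix (Fin sq) (Fin sp) ℝ :=
  Matrix.of fun c w => B (k, c) (l, w)

/-- The coefficient of `y^d` in the PolyDot product polynomial `p_A(y) p_B(y)`:
`P_d = Σ A_{i,j} B_{k,l}` over all (1-indexed) `(i,j,k,l)` with
`q(i−1) + (j−1) + (q−k) + pq(l−1) = d`; in the 0-indexed variables below this reads
`q·i + j + (q−1−k) + pq·l = d`. -/
noncomputable def polyDotCoeff {p q sp sq : ℕ}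
    (A : Matrix (Fin p × Fin sp) (Fin q × Fin sq) ℝ)
    (B : Matrix (Fin q × Fin sq) (Fin p × Fin sp) ℝ) (d : ℕ) :
    Matrix (Fin sp) (Fin sp) ℝ :=
  ∑ i : Fin p, ∑ j : Fin q, ∑ k : Fin q, ∑ l : Fin p,
    if q * (i : ℕ) + (j : ℕ) + (q - 1 - (k : ℕ)) + p * q * (l : ℕ) = d then
      blkA A i j * blkB B k l
    else 0

/-!
The exponents `q·i + j` of `p_A` are pairwise distinct, and so are the exponents
`(q - 1 - k) + pq·l` of `p_B`. Hence each block `A_{i,j}`, and each block `B_{k,l}`, occurs in at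
most one product of `P_d`, so the entry `(v, w)` of `P_d` is a sum `Σ a_t b_t` in which the `a_t`
are distinct entries of `A` and the `b_t` distinct entries of `B`. Cauchy–Schwarz bounds it by
`‖A‖_F ‖B‖_F ≤ η²`.
-/

open Finset

theorem Nat.eq_and_eq_of_add_mul_eq_add_mul {a a' m l l' : ℕ} (ha : a < m) (ha' : a' < m)
    (h : a + m * l = a' + m * l') : a = a' ∧ l = l' := by
  have hmod : a = a' := by
    simpa [Nat.add_mul_mod_self_left, Nat.mod_eq_of_lt ha, Nat.mod_eq_of_lt ha'] using
      congrArg (· % m) h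
  subst hmod
  exact ⟨rfl, Nat.eq_of_mul_eq_mul_left (a.zero_le.trans_lt ha) (Nat.add_left_cancel h)⟩

theorem Real.sum_sq_comp_le_of_injOn {ι α : Type*} [Fintype α] {s : Finset ι} {f : ι → α}
    (hf : Set.InjOn f s) (a : α → ℝ) : ∑ i ∈ s, a (f i) ^ 2 ≤ ∑ x, a x ^ 2 := by
  classical
  rw [← sum_image (f := fun x => a x ^ 2) hf]
  exact sum_le_univ_sum_of_nonneg fun _ => sq_nonneg _

theorem Real.abs_sum_mul_comp_le_of_injOn {ι α β : Type*} [Fintype α] [Fintype β]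
    {s : Finset ι} {f : ι → α} {g : ι → β} (hf : Set.InjOn f s) (hg : Set.InjOn g s)
    (a : α → ℝ) (b : β → ℝ) :
    |∑ i ∈ s, a (f i) * b (g i)| ≤ √(∑ x, a x ^ 2) * √(∑ y, b y ^ 2) := by
  calc |∑ i ∈ s, a (f i) * b (g i)|
      ≤ ∑ i ∈ s, |a (f i)| * |b (g i)| := by
        simpa only [abs_mul] using abs_sum_le_sum_abs (fun i => a (f i) * b (g i)) s
    _ ≤ √(∑ i ∈ s, |a (f i)| ^ 2) * √(∑ i ∈ s, |b (g i)| ^ 2) :=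
        Real.sum_mul_le_sqrt_mul_sqrt s _ _
    _ ≤ √(∑ x, a x ^ 2) * √(∑ y, b y ^ 2) := by
        simp only [sq_abs]
        gcongr
        exacts [Real.sum_sq_comp_le_of_injOn hf a, Real.sum_sq_comp_le_of_injOn hg b]

theorem frobNorm_eq_sqrt_sum_prod {α β : Type*} [Fintype α] [Fintype β] (M : Matrix α β ℝ) :
    frobNorm M = √(∑ x : α × β, M x.1 x.2 ^ 2) := by
  rw [frobNorm, Fintype.sum_prod_type]

theorem frobNorm_nonneg {α β : Type*} [Fintype α] [Fintype β] (M : Matrix α β ℝ) :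
    0 ≤ frobNorm M :=
  Real.sqrt_nonneg _

section PolyDot

variable {p q sp sq : ℕ}

-- The exponents of `y` carrying `A_{i,j}` in `p_A` and `B_{k,l}` in `p_B`, blocks 0-indexed.
def polyDotExpA (ij : Fin p × Fin q) : ℕ := q * ij.1 + ij.2

def polyDotExpB (kl : Fin q × Fin p) : ℕ := (q - 1 - kl.1) + p * q * kl.2

theorem polyDotExpA_injective : Function.Injective (polyDotExpA (p := p) (q := q)) := by
  rintro ⟨i, j⟩ ⟨i', j'⟩ h
  obtain ⟨hj, hi⟩ := Nat.eq_and_eq_of_add_mul_eq_add_mul (l := i) (l' := i') j.isLt j'.isLt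
    (by simp only [polyDotExpA] at h; omega)
  simp [Fin.ext hi, Fin.ext hj]

theorem polyDotExpB_injective : Function.Injective (polyDotExpB (p := p) (q := q)) := by
  rintro ⟨k, l⟩ ⟨k', l'⟩ h
  have hrev (k : Fin q) : q - 1 - (k : ℕ) = k.rev := by rw [Fin.val_rev]; omega
  obtain ⟨hk, hl⟩ := Nat.eq_and_eq_of_add_mul_eq_add_mul (l := p * l) (l' := p * l')
    k.rev.isLt k'.rev.isLt
    (by simp only [polyDotExpB, hrev] at h; rw [← mul_assoc, ← mul_assoc, mul_comm q p]; exact h)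
  simp [Fin.rev_injective (Fin.ext hk), Fin.ext (Nat.eq_of_mul_eq_mul_left l.pos hl)]

variable (p q) in
def polyDotIndices (d : ℕ) : Finset ((Fin p × Fin q) × (Fin q × Fin p)) :=
  univ.filter fun t => polyDotExpA t.1 + polyDotExpB t.2 = d

theorem injOn_fst_polyDotIndices (d : ℕ) : Set.InjOn Prod.fst
    (polyDotIndices p q d : Set ((Fin p × Fin q) × (Fin q × Fin p))) := by
  rintro ⟨ij, kl⟩ ht ⟨ij', kl'⟩ ht' (rfl : ij = ij')
  simp only [polyDotIndices, coe_filter, mem_univ, true_and, Set.mem_ofPred_eq] at ht ht'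
  rw [polyDotExpB_injective (by omega : polyDotExpB kl = polyDotExpB kl')]

theorem injOn_snd_polyDotIndices (d : ℕ) : Set.InjOn Prod.snd
    (polyDotIndices p q d : Set ((Fin p × Fin q) × (Fin q × Fin p))) := by
  rintro ⟨ij, kl⟩ ht ⟨ij', kl'⟩ ht' (rfl : kl = kl')
  simp only [polyDotIndices, coe_filter, mem_univ, true_and, Set.mem_ofPred_eq] at ht ht'
  rw [polyDotExpA_injective (by omega : polyDotExpA ij = polyDotExpA ij')]

theorem polyDotCoeff_apply (A : Matrix (Fin p × Fin sp) (Fin q × Fin sq) ℝ)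
    (B : Matrix (Fin q × Fin sq) (Fin p × Fin sp) ℝ) (d : ℕ) (v w : Fin sp) :
    polyDotCoeff A B d v w = ∑ t ∈ polyDotIndices p q d ×ˢ univ,
      A (t.1.1.1, v) (t.1.1.2, t.2) * B (t.1.2.1, t.2) (t.1.2.2, w) := by
  rw [sum_product, polyDotIndices, sum_filter]
  simp only [polyDotCoeff, Matrix.sum_apply, Fintype.sum_prod_type, polyDotExpA, polyDotExpB,
    ← add_assoc]
  refine sum_congr rfl fun i _ => sum_congr rfl fun j _ => sum_congr rfl fun k _ =>
    sum_congr rfl fun l _ => ?_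
  split_ifs <;> simp [Matrix.mul_apply, blkA, blkB]

theorem abs_polyDotCoeff_apply_le (A : Matrix (Fin p × Fin sp) (Fin q × Fin sq) ℝ)
    (B : Matrix (Fin q × Fin sq) (Fin p × Fin sp) ℝ) (d : ℕ) (v w : Fin sp) :
    |polyDotCoeff A B d v w| ≤ frobNorm A * frobNorm B := by
  set s := polyDotIndices p q d ×ˢ (univ : Finset (Fin sq))
  have hA : Set.InjOn
      (fun t : ((Fin p × Fin q) × (Fin q × Fin p)) × Fin sq => ((t.1.1.1, v), (t.1.1.2, t.2))) s := by
    rintro ⟨t, c⟩ ht ⟨t', c'⟩ ht' heq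
    simp only [Prod.mk.injEq, and_true] at heq
    obtain ⟨hi, hj, rfl⟩ := heq
    exact Prod.ext
      (injOn_fst_polyDotIndices d (mem_product.1 ht).1 (mem_product.1 ht').1 (Prod.ext hi hj)) rfl
  have hB : Set.InjOn
      (fun t : ((Fin p × Fin q) × (Fin q × Fin p)) × Fin sq => ((t.1.2.1, t.2), (t.1.2.2, w))) s := by
    rintro ⟨t, c⟩ ht ⟨t', c'⟩ ht' heq
    simp only [Prod.mk.injEq, and_true] at heq
    obtain ⟨⟨hk, rfl⟩, hl⟩ := heq
    exact Prod.ext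
      (injOn_snd_polyDotIndices d (mem_product.1 ht).1 (mem_product.1 ht').1 (Prod.ext hk hl)) rfl
  rw [polyDotCoeff_apply, frobNorm_eq_sqrt_sum_prod A, frobNorm_eq_sqrt_sum_prod B]
  exact Real.abs_sum_mul_comp_le_of_injOn hA hB (fun x => A x.1 x.2) (fun y => B y.1 y.2)

end PolyDot

theorem polydot_coeff_entry_bound_general {p q sp sq : ℕ} (η : ℝ)
    (A : Matrix (Fin p × Fin sp) (Fin q × Fin sq) ℝ)
    (B : Matrix (Fin q × Fin sq) (Fin p × Fin sp) ℝ)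
    (hA : frobNorm A ≤ η) (hB : frobNorm B ≤ η) :
    ∀ (d : ℕ) (v w : Fin sp), |polyDotCoeff A B d v w| ≤ η ^ 2 := by
  intro d v w
  calc |polyDotCoeff A B d v w| ≤ frobNorm A * frobNorm B := abs_polyDotCoeff_apply_le A B d v w
    _ ≤ η ^ 2 := by
      rw [pow_two]
      exact mul_le_mul hA hB (frobNorm_nonneg B) ((frobNorm_nonneg A).trans hA)

theorem polydot_coeff_entry_bound {p q sp sq : ℕ} (hp : 1 ≤ p) (hq : 1 ≤ q) (η : ℝ)
    (A : Matrix (Fin p × Fin sp) (Fin q × Fin sq) ℝ)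
    (B : Matrix (Fin q × Fin sq) (Fin p × Fin sp) ℝ)
    (hA : frobNorm A ≤ η) (hB : frobNorm B ≤ η) :
    ∀ (d : ℕ) (v w : Fin sp), |polyDotCoeff A B d v w| ≤ η ^ 2 :=
  polydot_coeff_entry_bound_general η A B hA hB
end

section
/- Suppose m divides n, A ∈ ℝ^{n×n} is partitioned into column blocks A_1,…,A_m ∈ ℝ^{n×(n/m)} and B ∈ ℝ^{n×n} into row blocks B_1,…,B_m ∈ ℝ^{(n/m)×n}, with ‖A‖_F ≤ η and ‖B‖_F ≤ η. Let K ≥ 1, let α_1,…,α_K, β_1,…,β_K ∈ ℝ^m and d ∈ ℝ^K, and define the error matrix E = I_m − Σ_{i=1}^{K} d_i α_i β_iᵀ, the decoded product Ĉ = Σ_{i=1}^{K} d_i (Σ_{j=1}^{m} α_i[j] A_j)(Σ_{j'=1}^{m} β_i[j'] B_{j'}), and C = AB. Then ‖C − Ĉ‖_F ≤ ‖E‖_F · m · η². -/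
open Matrix

/-!
Bilinearity gives `C - Ĉ = ∑_{j,j'} E_{jj'} A_j B_{j'}`. The triangle inequality and
submultiplicativity of `‖·‖_F` bound its norm by `∑ |E_{jj'}| ‖A_j‖_F ‖B_{j'}‖_F`, and
Cauchy–Schwarz over the pairs `(j, j')` bounds that by `‖E‖_F ‖A‖_F ‖B‖_F`, because `∑_j ‖A_j‖_F² = ‖A‖_F²`.
-/

attribute [local instance] Matrix.frobeniusSeminormedAddCommGroup Matrix.frobeniusNormedSpace

section FrobNorm

variable {ι κ : Type*} [Fintype ι] [Fintype κ]

lemma frobNorm_eq_norm (M : Matrix ι κ ℝ) : frobNorm M = ‖M‖ := by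
  simp only [frobNorm, Matrix.frobenius_norm_def, Real.norm_eq_abs, sq_abs, ← Real.sqrt_eq_rpow,
    Real.rpow_two]

lemma frobNorm_sq (M : Matrix ι κ ℝ) : frobNorm M ^ 2 = ∑ i, ∑ j, M i j ^ 2 :=
  Real.sq_sqrt <| Finset.sum_nonneg fun _ _ => Finset.sum_nonneg fun _ _ => sq_nonneg _

lemma frobNorm_nonneg_s14 (M : Matrix ι κ ℝ) : 0 ≤ frobNorm M := Real.sqrt_nonneg _

lemma sum_abs_mul_mul_le_frobNorm (M : Matrix ι κ ℝ) (a : ι → ℝ) (b : κ → ℝ) :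
    ∑ i, ∑ k, |M i k| * (a i * b k)
      ≤ frobNorm M * (√(∑ i, a i ^ 2) * √(∑ k, b k ^ 2)) := by
  have hM : √(∑ p : ι × κ, |M p.1 p.2| ^ 2) = frobNorm M := by
    simp only [frobNorm, Fintype.sum_prod_type, sq_abs]
  have hab : √(∑ p : ι × κ, (a p.1 * b p.2) ^ 2) = √(∑ i, a i ^ 2) * √(∑ k, b k ^ 2) := by
    rw [← Real.sqrt_mul (Finset.sum_nonneg fun _ _ => sq_nonneg _), Finset.sum_mul_sum,
      Fintype.sum_prod_type]
    simp only [mul_pow]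
  rw [← hM, ← hab, ← Fintype.sum_prod_type']
  exact Real.sum_mul_le_sqrt_mul_sqrt _ _ _

lemma frobNorm_sum_sum_smul_mul_le {ι' l n o : Type*} [Fintype ι'] [Fintype l] [Fintype n]
    [Fintype o] (M : Matrix ι ι' ℝ) (X : ι → Matrix l n ℝ) (Y : ι' → Matrix n o ℝ) :
    frobNorm (∑ j, ∑ j', M j j' • (X j * Y j'))
      ≤ frobNorm M * (√(∑ j, frobNorm (X j) ^ 2) * √(∑ j', frobNorm (Y j') ^ 2)) := by
  refine le_trans ?_ (sum_abs_mul_mul_le_frobNorm M _ _)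
  simp only [frobNorm_eq_norm]
  refine (norm_sum_le _ _).trans <| Finset.sum_le_sum fun j _ =>
    (norm_sum_le _ _).trans <| Finset.sum_le_sum fun j' _ => ?_
  rw [norm_smul, Real.norm_eq_abs]
  exact mul_le_mul_of_nonneg_left (Matrix.frobenius_norm_mul _ _) (abs_nonneg _)

end FrobNorm

section Bilinear

variable {R ι κ l n o : Type*} [CommRing R] [Fintype ι] [Fintype κ] [Fintype n]

lemma sum_smul_mul_sum_smul_eq (d : κ → R) (α β : κ → ι → R) (X : ι → Matrix l n R)
    (Y : ι → Matrix n o R) :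
    ∑ i, d i • ((∑ j, α i j • X j) * (∑ j', β i j' • Y j'))
      = ∑ j, ∑ j', (∑ i, d i • vecMulVec (α i) (β i)) j j' • (X j * Y j') := by
  simp only [Matrix.sum_mul, Matrix.mul_sum, Matrix.smul_mul, Matrix.mul_smul, smul_smul,
    Finset.smul_sum, Matrix.sum_apply, Matrix.smul_apply, vecMulVec_apply, smul_eq_mul,
    Finset.sum_smul]
  rw [Finset.sum_comm_cycle]
  refine Finset.sum_congr rfl fun j _ => ?_
  rw [Finset.sum_comm]
  refine Finset.sum_congr rfl fun j' _ => Finset.sum_congr rfl fun i _ => ?_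
  ring_nf

lemma sum_sum_one_smul [DecidableEq ι] {M : Type*} [AddCommMonoid M] [Module R M]
    (Z : ι → ι → M) : ∑ j, ∑ j', (1 : Matrix ι ι R) j j' • Z j j' = ∑ j, Z j j := by
  simp [Matrix.one_apply, ite_smul]

end Bilinear

section Blocks

variable {m t : ℕ}

lemma mul_eq_sum_colBlk_mul_rowBlk (A : Matrix (Fin (m * t)) (Fin m × Fin t) ℝ)
    (B : Matrix (Fin m × Fin t) (Fin (m * t)) ℝ) :
    A * B = ∑ j, colBlk A j * rowBlk B j := by
  ext v w
  simp [Matrix.mul_apply, Matrix.sum_apply, colBlk, rowBlk, Fintype.sum_prod_type]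

lemma sum_frobNorm_colBlk_sq (A : Matrix (Fin (m * t)) (Fin m × Fin t) ℝ) :
    ∑ j, frobNorm (colBlk A j) ^ 2 = frobNorm A ^ 2 := by
  simp only [frobNorm_sq, colBlk, Matrix.of_apply, Fintype.sum_prod_type]
  exact Finset.sum_comm

lemma sum_frobNorm_rowBlk_sq (B : Matrix (Fin m × Fin t) (Fin (m * t)) ℝ) :
    ∑ j, frobNorm (rowBlk B j) ^ 2 = frobNorm B ^ 2 := by
  simp only [frobNorm_sq, rowBlk, Matrix.of_apply, Fintype.sum_prod_type]

end Blocks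

lemma mul_sub_decoded_eq_sum_smul_colBlk_mul_rowBlk {m t K : ℕ}
    (A : Matrix (Fin (m * t)) (Fin m × Fin t) ℝ) (B : Matrix (Fin m × Fin t) (Fin (m * t)) ℝ)
    (α β : Fin K → Fin m → ℝ) (d : Fin K → ℝ) :
    A * B - ∑ i, d i •
        ((∑ j : Fin m, α i j • colBlk A j) * (∑ j' : Fin m, β i j' • rowBlk B j'))
      = ∑ j, ∑ j', ((1 : Matrix (Fin m) (Fin m) ℝ) - ∑ i, d i • vecMulVec (α i) (β i)) j j' •
          (colBlk A j * rowBlk B j') := by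
  rw [mul_eq_sum_colBlk_mul_rowBlk, sum_smul_mul_sum_smul_eq,
    ← sum_sum_one_smul (R := ℝ) fun j j' => colBlk A j * rowBlk B j']
  simp only [← Finset.sum_sub_distrib, Matrix.sub_apply, sub_smul]

theorem decoded_product_error_bound_general {m t K : ℕ} (hm : 1 ≤ m) (η : ℝ)
    (A : Matrix (Fin (m * t)) (Fin m × Fin t) ℝ)
    (B : Matrix (Fin m × Fin t) (Fin (m * t)) ℝ)
    (hA : frobNorm A ≤ η) (hB : frobNorm B ≤ η)
    (α β : Fin K → Fin m → ℝ) (d : Fin K → ℝ) :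
    frobNorm (A * B - ∑ i, d i •
        ((∑ j : Fin m, α i j • colBlk A j) * (∑ j' : Fin m, β i j' • rowBlk B j')))
      ≤ frobNorm ((1 : Matrix (Fin m) (Fin m) ℝ) - ∑ i, d i • vecMulVec (α i) (β i))
          * m * η ^ 2 := by
  set E := (1 : Matrix (Fin m) (Fin m) ℝ) - ∑ i, d i • vecMulVec (α i) (β i)
  have hAB : frobNorm A * frobNorm B ≤ m * η ^ 2 :=
    calc frobNorm A * frobNorm B ≤ η ^ 2 := by
          rw [sq]; exact mul_le_mul hA hB (frobNorm_nonneg_s14 B) ((frobNorm_nonneg_s14 A).trans hA)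
      _ ≤ m * η ^ 2 := le_mul_of_one_le_left (sq_nonneg η) (mod_cast hm)
  calc _ = frobNorm (∑ j, ∑ j', E j j' • (colBlk A j * rowBlk B j')) := by
          rw [mul_sub_decoded_eq_sum_smul_colBlk_mul_rowBlk]
    _ ≤ frobNorm E * (frobNorm A * frobNorm B) := by
          simpa only [sum_frobNorm_colBlk_sq, sum_frobNorm_rowBlk_sq,
            Real.sqrt_sq (frobNorm_nonneg_s14 _)]
            using frobNorm_sum_sum_smul_mul_le E (colBlk A) (rowBlk B)
    _ ≤ frobNorm E * m * η ^ 2 := by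
          rw [mul_assoc]; exact mul_le_mul_of_nonneg_left hAB (frobNorm_nonneg_s14 E)

theorem decoded_product_error_bound {m t K : ℕ} (hm : 1 ≤ m) (hK : 1 ≤ K) (η : ℝ)
    (A : Matrix (Fin (m * t)) (Fin m × Fin t) ℝ)
    (B : Matrix (Fin m × Fin t) (Fin (m * t)) ℝ)
    (hA : frobNorm A ≤ η) (hB : frobNorm B ≤ η)
    (α β : Fin K → Fin m → ℝ) (d : Fin K → ℝ) :
    frobNorm (A * B - ∑ i, d i •
        ((∑ j : Fin m, α i j • colBlk A j) * (∑ j' : Fin m, β i j' • rowBlk B j')))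
      ≤ frobNorm ((1 : Matrix (Fin m) (Fin m) ℝ) - ∑ i, d i • vecMulVec (α i) (β i))
          * m * η ^ 2 :=
  decoded_product_error_bound_general hm η A B hA hB α β d
end

section
/- Suppose m divides n, A ∈ ℝ^{n×n} is partitioned into column blocks A_1,…,A_m ∈ ℝ^{n×(n/m)} and B ∈ ℝ^{n×n} into row blocks B_1,…,B_m ∈ ℝ^{(n/m)×n}. Define the matrix polynomials p_A(x) = Σ_{i=1}^{m} A_i x^{i−1} and p_B(x) = Σ_{j=1}^{m} B_j x^{m−j}. Then for every real number x, p_A(x)·p_B(x) = Σ_{l=1}^{2m−1} P_l x^{l−1}, and the middle coefficient satisfies P_m = Σ_{i=1}^{m} A_i B_i = AB. -/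
open Matrix

open Finset

section Degree

variable {R M : Type*} [Monoid R] [AddCommMonoid M] [DistribMulAction R M] {m : ℕ}

/-- The term `x ^ (i + (m - 1 - j))` has exponent `l - 1` exactly for the `l ∈ [1, 2m - 1]`
with `i - j = l - m`, namely `l = m + i - j`. -/
theorem sum_sum_pow_smul_eq_sum_Icc (x : R) (f : Fin m → Fin m → M) :
    ∑ i : Fin m, ∑ j : Fin m, x ^ ((i : ℕ) + (m - 1 - (j : ℕ))) • f i j =
      ∑ l ∈ Icc 1 (2 * m - 1), x ^ (l - 1) •
        ∑ i : Fin m, ∑ j : Fin m, if (i : ℤ) - j = (l : ℤ) - m then f i j else 0 := by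
  simp only [smul_sum, smul_ite, smul_zero]
  conv_rhs => rw [sum_comm]
  refine sum_congr rfl fun i _ => ?_
  conv_rhs => rw [sum_comm]
  refine sum_congr rfl fun j _ => ?_
  have hi := i.isLt
  have hj := j.isLt
  have hcond : ∀ l ∈ Icc 1 (2 * m - 1), ((i : ℤ) - j = (l : ℤ) - m ↔ m + i - j = l) := by
    intro l _
    omega
  rw [sum_congr rfl fun l hl => if_congr (hcond l hl) rfl rfl, sum_ite_eq,
    if_pos (mem_Icc.mpr ⟨by omega, by omega⟩)]
  have hexp : (i : ℕ) + (m - 1 - j) = m + i - j - 1 := by omega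
  rw [hexp]

theorem sum_sum_ite_sub_eq_self (f : Fin m → Fin m → M) :
    ∑ i : Fin m, ∑ j : Fin m, (if (i : ℤ) - j = (m : ℤ) - m then f i j else 0) =
      ∑ i : Fin m, f i i := by
  refine sum_congr rfl fun i _ => ?_
  have hdiag : ∀ j : Fin m, ((i : ℤ) - j = (m : ℤ) - m ↔ i = j) := fun j => by
    rw [sub_self, sub_eq_zero, Nat.cast_inj, Fin.val_inj]
  simp only [hdiag, sum_ite_eq, mem_univ, if_true]

end Degree

theorem sum_colBlk_mul_rowBlk {m t : ℕ} (A : Matrix (Fin (m * t)) (Fin m × Fin t) ℝ)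
    (B : Matrix (Fin m × Fin t) (Fin (m * t)) ℝ) :
    ∑ i : Fin m, colBlk A i * rowBlk B i = A * B := by
  ext v w
  simp [mul_apply, colBlk, rowBlk, Matrix.sum_apply, Fintype.sum_prod_type]

theorem matdot_polynomial_identity_general {m t : ℕ}
    (A : Matrix (Fin (m * t)) (Fin m × Fin t) ℝ)
    (B : Matrix (Fin m × Fin t) (Fin (m * t)) ℝ) :
    (∀ x : ℝ,
      (∑ i : Fin m, x ^ (i : ℕ) • colBlk A i) * (∑ j : Fin m, x ^ (m - 1 - (j : ℕ)) • rowBlk B j)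
        = ∑ l ∈ Finset.Icc 1 (2 * m - 1), x ^ (l - 1) • matDotCoeff A B l) ∧
    matDotCoeff A B m = ∑ i : Fin m, colBlk A i * rowBlk B i ∧
    matDotCoeff A B m = A * B := by
  have hmid : matDotCoeff A B m = ∑ i : Fin m, colBlk A i * rowBlk B i :=
    sum_sum_ite_sub_eq_self _
  refine ⟨fun x => ?_, hmid, hmid.trans (sum_colBlk_mul_rowBlk A B)⟩
  rw [Matrix.sum_mul]
  simp_rw [Matrix.mul_sum, Matrix.smul_mul, Matrix.mul_smul, smul_smul, ← pow_add]
  exact sum_sum_pow_smul_eq_sum_Icc x fun i j => colBlk A i * rowBlk B j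

theorem matdot_polynomial_identity {m t : ℕ} (hm : 1 ≤ m)
    (A : Matrix (Fin (m * t)) (Fin m × Fin t) ℝ)
    (B : Matrix (Fin m × Fin t) (Fin (m * t)) ℝ) :
    (∀ x : ℝ,
      (∑ i : Fin m, x ^ (i : ℕ) • colBlk A i) * (∑ j : Fin m, x ^ (m - 1 - (j : ℕ)) • rowBlk B j)
        = ∑ l ∈ Finset.Icc 1 (2 * m - 1), x ^ (l - 1) • matDotCoeff A B l) ∧
    matDotCoeff A B m = ∑ i : Fin m, colBlk A i * rowBlk B i ∧
    matDotCoeff A B m = A * B :=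
  matdot_polynomial_identity_general A B
end
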